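/- For all a, b ∈ lie_n, η_gr(a, b) = −Σ_{i=1}^n (∂_i a)·x_i·ι(∂_i b) in ass_n. -/

import Mathlib

noncomputable section

open scoped TensorProduct

attribute [local instance 100] LieRing.ofAssociativeRing

/-- The free unital associative algebra over `ℚ` on `N` generators. -/
abbrev Ass (N : ℕ) : Type := FreeAlgebra ℚ (Fin N)

/-- The `i`-th generator `x_i`. -/
def gen {N : ℕ} (i : Fin N) : Ass N := FreeAlgebra.ι ℚ i

/-- The monomial (word) associated to a list of generator indices. -/
def wordProd {N : ℕ} (l : List (Fin N)) : Ass N := (l.map gen).prod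

/-- Extend a function on words (monomials) to a `ℚ`-linear map on the free algebra,
using the monomial basis. -/
def liftWord {N : ℕ} {A : Type} [AddCommGroup A] [Module ℚ A]
    (f : List (Fin N) → A) : Ass N →ₗ[ℚ] A :=
  (FreeAlgebra.basisFreeMonoid ℚ (Fin N)).constr ℚ fun w => f w.toList

/-- `μ_gr` on a word. -/
def muWord {N : ℕ} : List (Fin N) → Ass N
  | [] => 0
  | [_] => 0
  | a :: b :: t => (if a = b then -(wordProd (a :: t)) else 0) + gen a * muWord (b :: t)

/-- The linearized self-intersection operation `μ_gr`. -/
def muGr (N : ℕ) : Ass N →ₗ[ℚ] Ass N := liftWord muWord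

/-- The antipode: the anti-automorphism `ι` with `ι(x_i) = -x_i`, as a linear map. -/
def iotaMap (N : ℕ) : Ass N →ₗ[ℚ] Ass N :=
  liftWord fun l => ((-1 : ℚ) ^ l.length) • wordProd l.reverse

/-- The (right) partial derivative `∂_i`, characterized on `lie_N` by
`a = Σ_i (∂_i a) x_i`. -/
def partialD {N : ℕ} (i : Fin N) : Ass N →ₗ[ℚ] Ass N :=
  liftWord fun l =>
    match l.getLast? with
    | some a => if a = i then wordProd l.dropLast else 0
    | none => 0

/-- `η_gr` on a pair of words. -/
def etaWord {N : ℕ} (l r : List (Fin N)) : Ass N :=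
  match l.getLast?, r with
  | some a, b :: t => if a = b then -(wordProd (l.dropLast ++ a :: t)) else 0
  | _, _ => 0

/-- The linearized homotopy intersection form `η_gr`. -/
def etaGr (N : ℕ) : Ass N →ₗ[ℚ] Ass N →ₗ[ℚ] Ass N :=
  liftWord fun l => liftWord fun r => etaWord l r

/-- Degree-`k` homogeneous part of a free algebra (word-length grading). -/
def homogS (X : Type) (k : ℕ) : Submodule ℚ (FreeAlgebra ℚ X) :=
  Submodule.span ℚ {z | ∃ l : List X, l.length = k ∧ z = (l.map (FreeAlgebra.ι ℚ)).prod}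

/-- The projection onto the degree-`k` homogeneous component. -/
def homogComp {N : ℕ} (k : ℕ) : Ass N →ₗ[ℚ] Ass N :=
  liftWord fun l => if l.length = k then wordProd l else 0

/-- The free Lie algebra on `x_1, …, x_N`, as the Lie subalgebra of `Ass N`
(with the commutator bracket) generated by the generators. -/
def lieN (N : ℕ) : LieSubalgebra ℚ (Ass N) :=
  LieSubalgebra.lieSpan ℚ (Ass N) (Set.range (gen (N := N)))

/-- The generator `x_i` as an element of `lie_N`. -/
def genL (N : ℕ) (i : Fin N) : lieN N :=
  ⟨gen i, LieSubalgebra.subset_lieSpan ⟨i, rfl⟩⟩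

/-- Substitution: the algebra endomorphism of `ass_2` with `x ↦ p`, `y ↦ q`. -/
def sub2 (p q : Ass 2) : Ass 2 →ₐ[ℚ] Ass 2 := FreeAlgebra.lift ℚ ![p, q]

/-- `x`. -/
def xA : Ass 2 := gen 0
/-- `y`. -/
def yA : Ass 2 := gen 1

/-- Equation (E1): `φ(y,0) − φ(x+y,0) = 0`. -/
def E1 (φ : Ass 2) : Prop := sub2 yA 0 φ - sub2 (xA + yA) 0 φ = 0

/-- Equation (E2): `(∂_y φ) + (∂_y φ)(y,0) − (∂_y φ)(x+y,0) − R(φ) = 0`,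
where `R` is the restriction of `μ_gr` to `lie_2`. -/
def E2 (φ : Ass 2) : Prop :=
  partialD 1 φ + sub2 yA 0 (partialD 1 φ) - sub2 (xA + yA) 0 (partialD 1 φ) - muGr 2 φ = 0

/-- Equation (E3): `[x, φ(y,x)] + [y, φ(x,y)] = 0`. -/
def E3 (φ : Ass 2) : Prop := ⁅xA, sub2 yA xA φ⁆ + ⁅yA, φ⁆ = 0

/-- `ν^em(φ) = (φ(y,x), φ(x,y))`. -/
def nuEm (φ : Ass 2) : Fin 2 → Ass 2 := ![sub2 yA xA φ, φ]

/-- The space `grt_1^em` of solutions to the linearized emergent equations. -/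
def grt1em : Set (Ass 2) := {φ | φ ∈ lieN 2 ∧ E1 φ ∧ E2 φ ∧ E3 φ}

/-- The derivation `ρ(ũ)` on a word. -/
def rhoWord {N : ℕ} (u : Fin N → Ass N) : List (Fin N) → Ass N
  | [] => 0
  | a :: t => ⁅gen a, u a⁆ * wordProd t + gen a * rhoWord u t

/-- The tangential derivation `ρ(ũ)`, determined by `ρ(ũ)(x_i) = [x_i, u_i]`. -/
def rho {N : ℕ} (u : Fin N → Ass N) : Ass N →ₗ[ℚ] Ass N := liftWord (rhoWord u)

/-- The span of commutators in `ass_N`. -/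
def trRel (N : ℕ) : Submodule ℚ (Ass N) :=
  Submodule.span ℚ {z | ∃ a b : Ass N, z = a * b - b * a}

/-- The trace space `tr_N = ass_N/[ass_N, ass_N]`. -/
abbrev Tr (N : ℕ) : Type := Ass N ⧸ trRel N

/-- The projection `|·| : ass_N → tr_N`. -/
def trM (N : ℕ) : Ass N →ₗ[ℚ] Tr N := (trRel N).mkQ

/-- The divergence `div(ũ) = Σ_i |x_i (∂_i u_i)|`. -/
def divergence {N : ℕ} (u : Fin N → Ass N) : Tr N :=
  ∑ i, trM N (gen i * partialD i (u i))

/-- `ũ ∈ tder_N`: all components lie in `lie_N`. -/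
def IsTDer {N : ℕ} (u : Fin N → Ass N) : Prop := ∀ i, u i ∈ lieN N

/-- `ũ ∈ sder_N`. -/
def IsSDer {N : ℕ} (u : Fin N → Ass N) : Prop := IsTDer u ∧ rho u (∑ i, gen i) = 0

/-- `ũ ∈ krv_N`. -/
def IsKRV {N : ℕ} (u : Fin N → Ass N) : Prop :=
  IsSDer u ∧ ∃ f : Fin (N + 1) → Polynomial ℚ,
    divergence u =
      trM N (Polynomial.aeval (∑ i, gen i) (f 0)) +
        ∑ i : Fin N, trM N (Polynomial.aeval (gen i) (f i.succ))

/-- `ũ ∈ krv_N^0`. -/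
def IsKRV0 {N : ℕ} (u : Fin N → Ass N) : Prop :=
  IsSDer u ∧ ∃ cf : Fin N → ℚ, divergence u = ∑ i, cf i • trM N (gen i)

/-- The swap `u(x,y) ↦ u(y,x)`. -/
def swapA : Ass 2 →ₐ[ℚ] Ass 2 := sub2 yA xA

/-- `ũ ∈ krv_2^sym`. -/
def IsKRVsym (u : Fin 2 → Ass 2) : Prop := IsKRV u ∧ u 1 = swapA (u 0)


/-- The coproduct `Δ` on `ass_N`, with `Δ(x_i) = x_i ⊗ 1 + 1 ⊗ x_i`. -/
def comulA (N : ℕ) : Ass N →ₐ[ℚ] (Ass N ⊗[ℚ] Ass N) :=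
  FreeAlgebra.lift ℚ fun i => gen i ⊗ₜ[ℚ] (1 : Ass N) + (1 : Ass N) ⊗ₜ[ℚ] gen i

/-- `μ_{r,gr} = ((|·|∘mult) ⊗ id) ∘ (id ⊗ ((ι ⊗ id) ∘ Δ)) ∘ (id ⊗ μ_gr) ∘ Δ`. -/
def muR (N : ℕ) : Ass N →ₗ[ℚ] Tr N ⊗[ℚ] Ass N :=
  (TensorProduct.map ((trM N).comp (LinearMap.mul' ℚ (Ass N))) LinearMap.id).comp <|
    ((TensorProduct.assoc ℚ (Ass N) (Ass N) (Ass N)).symm.toLinearMap).comp <|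
      (TensorProduct.map LinearMap.id
          ((TensorProduct.map (iotaMap N) LinearMap.id).comp (comulA N).toLinearMap)).comp <|
        (TensorProduct.map LinearMap.id (muGr N)).comp (comulA N).toLinearMap

/-- `Alt(a ⊗ b) = a ⊗ b - b ⊗ a`. -/
def altMap (N : ℕ) : Tr N ⊗[ℚ] Tr N →ₗ[ℚ] Tr N ⊗[ℚ] Tr N :=
  LinearMap.id - (TensorProduct.comm ℚ (Tr N) (Tr N)).toLinearMap

/-- The linearized Turaev cobracket `δ_gr = Alt ∘ (id ⊗ |·|) ∘ μ_{r,gr}`. -/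
def Dgr (N : ℕ) : Ass N →ₗ[ℚ] Tr N ⊗[ℚ] Tr N :=
  (altMap N).comp ((TensorProduct.map LinearMap.id (trM N)).comp (muR N))

/-- Index type of the generators `t_{pq}` (`p ≠ q`) of the Drinfeld–Kohno Lie algebra. -/
def dkGenIdx (N : ℕ) : Type := {pq : Fin N × Fin N // pq.1 ≠ pq.2}

abbrev FLdk (N : ℕ) := FreeLieAlgebra ℚ (dkGenIdx N)

def tFree {N : ℕ} (p q : Fin N) (h : p ≠ q) : FLdk N := FreeLieAlgebra.of ℚ ⟨(p, q), h⟩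

/-- The defining relations of `dk_N`: symmetry, commutation and 4T. -/
def dkRels (N : ℕ) : Set (FLdk N) :=
  {z | ∃ (p q : Fin N) (h : p ≠ q), z = tFree p q h - tFree q p h.symm} ∪
  {z | ∃ (p q r s : Fin N) (hpq : p ≠ q) (hrs : r ≠ s),
      p ≠ r ∧ p ≠ s ∧ q ≠ r ∧ q ≠ s ∧ z = ⁅tFree p q hpq, tFree r s hrs⁆} ∪
  {z | ∃ (p q r : Fin N) (hpq : p ≠ q) (hqr : q ≠ r) (hpr : p ≠ r),
      z = ⁅tFree p q hpq + tFree q r hqr, tFree p r hpr⁆}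

def dkIdeal (N : ℕ) : LieIdeal ℚ (FLdk N) := LieSubmodule.lieSpan ℚ (FLdk N) (dkRels N)

/-- The Drinfeld–Kohno Lie algebra `dk_N`. -/
abbrev dk (N : ℕ) := FLdk N ⧸ dkIdeal N

/-- The generator `t_{pq}` of `dk_N`. -/
def tGen {N : ℕ} (p q : Fin N) (h : p ≠ q) : dk N :=
  LieSubmodule.Quotient.mk (N := dkIdeal N) (tFree p q h)

/-- Index type of the generators of the mixed Drinfeld–Kohno Lie algebra `dk_{m,n}`:
pairs of distinct indices in `Fin (m+n)`, not both poles (i.e., not both `< m`). -/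
def MIdx (m n : ℕ) : Type :=
  {pq : Fin (m + n) × Fin (m + n) // pq.1 ≠ pq.2 ∧ (m ≤ (pq.1 : ℕ) ∨ m ≤ (pq.2 : ℕ))}

abbrev FLmix (m n : ℕ) := FreeLieAlgebra ℚ (MIdx m n)

def tMix {m n : ℕ} (p q : Fin (m + n)) (h : p ≠ q)
    (hm : m ≤ (p : ℕ) ∨ m ≤ (q : ℕ)) : FLmix m n :=
  FreeLieAlgebra.of ℚ ⟨(p, q), h, hm⟩

/-- The defining relations of `dk_{m,n}`: exactly the symmetry, commutation and 4T relations
of `dk_{m+n}` involving only mixed pairs. -/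
def mixRels (m n : ℕ) : Set (FLmix m n) :=
  {z | ∃ (p q : Fin (m + n)) (h : p ≠ q) (hm : m ≤ (p : ℕ) ∨ m ≤ (q : ℕ)),
      z = tMix p q h hm - tMix q p h.symm hm.symm} ∪
  {z | ∃ (p q r s : Fin (m + n)) (hpq : p ≠ q) (hmpq : m ≤ (p : ℕ) ∨ m ≤ (q : ℕ))
      (hrs : r ≠ s) (hmrs : m ≤ (r : ℕ) ∨ m ≤ (s : ℕ)),
      p ≠ r ∧ p ≠ s ∧ q ≠ r ∧ q ≠ s ∧ z = ⁅tMix p q hpq hmpq, tMix r s hrs hmrs⁆} ∪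
  {z | ∃ (p q r : Fin (m + n)) (hpq : p ≠ q) (hmpq : m ≤ (p : ℕ) ∨ m ≤ (q : ℕ))
      (hqr : q ≠ r) (hmqr : m ≤ (q : ℕ) ∨ m ≤ (r : ℕ))
      (hpr : p ≠ r) (hmpr : m ≤ (p : ℕ) ∨ m ≤ (r : ℕ)),
      z = ⁅tMix p q hpq hmpq + tMix q r hqr hmqr, tMix p r hpr hmpr⁆}

def mixIdeal (m n : ℕ) : LieIdeal ℚ (FLmix m n) :=
  LieSubmodule.lieSpan ℚ (FLmix m n) (mixRels m n)

/-- The mixed Drinfeld–Kohno Lie algebra `dk_{m,n}`. -/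
abbrev dkmn (m n : ℕ) := FLmix m n ⧸ mixIdeal m n

lemma castAdd_ne_natAdd {m n : ℕ} (i : Fin m) (j : Fin n) :
    Fin.castAdd n i ≠ Fin.natAdd m j := by
  intro h
  have hv := congrArg Fin.val h
  simp only [Fin.coe_castAdd, Fin.coe_natAdd] at hv
  have := i.isLt
  omega

lemma natAdd_ne {m n : ℕ} {u v : Fin n} (h : u ≠ v) :
    Fin.natAdd m u ≠ Fin.natAdd m v := by
  intro hh
  exact h (by
    have hv := congrArg Fin.val hh
    simp only [Fin.coe_natAdd] at hv
    exact Fin.ext (by omega))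

lemma natAdd_le_left (m : ℕ) {n : ℕ} (j : Fin n) : m ≤ (Fin.natAdd m j : ℕ) := by
  simp only [Fin.coe_natAdd]; omega

/-- The generator `a_{ij}` of `dk_{m,n}` (0-indexed): `a_{ij} = t_{i(m+j)}`. -/
def aG {m n : ℕ} (i : Fin m) (j : Fin n) : dkmn m n :=
  LieSubmodule.Quotient.mk (N := mixIdeal m n)
    (tMix (Fin.castAdd n i) (Fin.natAdd m j) (castAdd_ne_natAdd i j)
      (Or.inr (natAdd_le_left m j)))

/-- The generator `c_{ij}` of `dk_{m,n}` (0-indexed): `c_{ij} = t_{(m+i)(m+j)}`. -/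
def cG {m n : ℕ} (u v : Fin n) (h : u ≠ v) : dkmn m n :=
  LieSubmodule.Quotient.mk (N := mixIdeal m n)
    (tMix (Fin.natAdd m u) (Fin.natAdd m v) (natAdd_ne h)
      (Or.inl (natAdd_le_left m u)))

/-- The Lie ideal `c` of `dk_{m,n}` generated by the `c_{ij}`. -/
def cId (m n : ℕ) : LieIdeal ℚ (dkmn m n) :=
  LieSubmodule.lieSpan ℚ (dkmn m n) {z | ∃ (u v : Fin n) (h : u ≠ v), z = cG u v h}

/-- The Lie ideal `[c,c]`. -/
def ccId (m n : ℕ) : LieIdeal ℚ (dkmn m n) := ⁅cId m n, cId m n⁆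

/-- The emergent Drinfeld–Kohno Lie algebra `edk_{m,n} = dk_{m,n}/[c,c]`. -/
abbrev edk (m n : ℕ) := dkmn m n ⧸ ccId m n

/-- Projection `dk_{m,n} → edk_{m,n}` as a function. -/
def eprojF (m n : ℕ) : dkmn m n → edk m n := LieSubmodule.Quotient.mk (N := ccId m n)

/-- Projection `dk_{m,n} → edk_{m,n}` as a `ℚ`-linear map. -/
def eproj (m n : ℕ) : dkmn m n →ₗ[ℚ] edk m n := (ccId m n).toSubmodule.mkQ

/-- `a_{ij}` in `edk_{m,n}`. -/
def aGE {m n : ℕ} (i : Fin m) (j : Fin n) : edk m n := eprojF m n (aG i j)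

/-- `c_{ij}` in `edk_{m,n}`. -/
def cGE {m n : ℕ} (u v : Fin n) (h : u ≠ v) : edk m n := eprojF m n (cG u v h)

/-- The canonical Lie algebra map `FreeLieAlgebra ℚ (Fin m) → ass_m`,
whose image is `lie_m`. -/
def toAssL (m : ℕ) : FreeLieAlgebra ℚ (Fin m) →ₗ⁅ℚ⁆ FreeAlgebra ℚ (Fin m) :=
  FreeLieAlgebra.lift ℚ (FreeAlgebra.ι ℚ)

/-- `u ↦ u_i` (at `dk` level): the Lie algebra map with `x_p ↦ a_{pi}`. -/
def uEldk {m n : ℕ} (i : Fin n) : FreeLieAlgebra ℚ (Fin m) →ₗ⁅ℚ⁆ dkmn m n :=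
  FreeLieAlgebra.lift ℚ fun p => aG p i

/-- `u ↦ u_i`: the Lie algebra map `lie_m → edk_{m,n}` with `x_p ↦ a_{pi}`. -/
def uEl {m n : ℕ} (i : Fin n) : FreeLieAlgebra ℚ (Fin m) →ₗ⁅ℚ⁆ edk m n :=
  FreeLieAlgebra.lift ℚ fun p => aGE p i

/-- Iterated bracketing `[a_{p₁ j}, [a_{p₂ j}, [… , [a_{p_d j}, ξ]…]]]`. -/
def adWApply {m n : ℕ} (j : Fin n) : List (Fin m) → edk m n → edk m n
  | [], ξ => ξ
  | p :: t, ξ => ⁅aGE p j, adWApply j t ξ⁆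


/-- `w ↦ w_{uv}`: the linear map `ass_m → edk_{m,n}` with
`1 ↦ c_{uv}` and `(x_{p₁}⋯x_{p_d}) ↦ [a_{p₁ v}, [… [a_{p_d v}, c_{uv}]…]]`. -/
def wEl {m n : ℕ} (u v : Fin n) (h : u ≠ v) : Ass m →ₗ[ℚ] edk m n :=
  liftWord fun l => adWApply v l (cGE u v h)

/-- `ad_w^{(l)}(ξ)`, linear in `w`. -/
def adOp {m n : ℕ} (l : Fin n) (ξ : edk m n) : Ass m →ₗ[ℚ] edk m n :=
  liftWord fun lst => adWApply l lst ξ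

/-- Degree-`k` part of the free Lie algebra (generators of degree 1), realized as the
preimage of the degree-`k` part of the free associative algebra under the canonical map. -/
def flHomog (X : Type) (k : ℕ) : Submodule ℚ (FreeLieAlgebra ℚ X) :=
  Submodule.comap
    (FreeLieAlgebra.lift ℚ (FreeAlgebra.ι ℚ (X := X)) :
      FreeLieAlgebra ℚ X →ₗ⁅ℚ⁆ FreeAlgebra ℚ X).toLinearMap
    (homogS X k)

/-- Degree-`k` part of `edk_{m,n}`. -/
def edkHomog (m n : ℕ) (k : ℕ) : Submodule ℚ (edk m n) :=
  (((flHomog (MIdx m n) k).map (mixIdeal m n).toSubmodule.mkQ)).map (eproj m n)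

-- Fin helper lemmas
lemma castSucc_ne_of_ne {n : ℕ} {u v : Fin n} (h : u ≠ v) :
    Fin.castSucc u ≠ Fin.castSucc v := fun hh => h (Fin.castSucc_injective n hh)

lemma succ_ne_of_ne {n : ℕ} {u v : Fin n} (h : u ≠ v) :
    Fin.succ u ≠ Fin.succ v := fun hh => h (Fin.succ_injective n hh)

lemma castSucc_ne_last {n : ℕ} (u : Fin n) : Fin.castSucc u ≠ Fin.last n :=
  (Fin.castSucc_lt_last u).ne

lemma castSucc_ne_succ_of_le {n : ℕ} {u v : Fin n} (h : u ≤ v) :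
    Fin.castSucc u ≠ Fin.succ v := by
  intro hh
  have hv := congrArg Fin.val hh
  simp only [Fin.coe_castSucc, Fin.val_succ] at hv
  have := Fin.le_def.mp h
  omega

/-- `D` is the pole coface map `δ_k : dk_{m,n} → dk_{m+1,n}`, `0 ≤ k ≤ m`
(1-indexed `k`; `k = 0` is extension on the left). -/
def IsDeltaPole (m n : ℕ) (k : ℕ) (D : dkmn m n →ₗ⁅ℚ⁆ dkmn (m + 1) n) : Prop :=
  (∀ (i : Fin m) (j : Fin n),
     (((i : ℕ) + 1 < k) → D (aG i j) = aG (Fin.castSucc i) j) ∧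
     (((i : ℕ) + 1 = k) → D (aG i j) = aG (Fin.castSucc i) j + aG (Fin.succ i) j) ∧
     ((k < (i : ℕ) + 1) → D (aG i j) = aG (Fin.succ i) j)) ∧
  (∀ (u v : Fin n) (h : u ≠ v), D (cG u v h) = cG u v h)

/-- `D` is the strand coface map `δ_{m+κ} : dk_{m,n} → dk_{m,n+1}`, `1 ≤ κ ≤ n+1`
(1-indexed strand `κ`; `κ = n+1` is extension on the right). -/
def IsDeltaStrand (m n : ℕ) (κ : ℕ) (D : dkmn m n →ₗ⁅ℚ⁆ dkmn m (n + 1)) : Prop :=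
  (∀ (i : Fin m) (j : Fin n),
     (((j : ℕ) + 1 < κ) → D (aG i j) = aG i (Fin.castSucc j)) ∧
     (((j : ℕ) + 1 = κ) → D (aG i j) = aG i (Fin.castSucc j) + aG i (Fin.succ j)) ∧
     ((κ < (j : ℕ) + 1) → D (aG i j) = aG i (Fin.succ j))) ∧
  (∀ (u v : Fin n) (h : u < v),
     (((v : ℕ) + 1 < κ) →
        D (cG u v h.ne) = cG (Fin.castSucc u) (Fin.castSucc v) (castSucc_ne_of_ne h.ne)) ∧
     (((v : ℕ) + 1 = κ) →
        D (cG u v h.ne) = cG (Fin.castSucc u) (Fin.castSucc v) (castSucc_ne_of_ne h.ne)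
          + cG (Fin.castSucc u) (Fin.succ v) (castSucc_ne_succ_of_le h.le)) ∧
     (((u : ℕ) + 1 < κ ∧ κ < (v : ℕ) + 1) →
        D (cG u v h.ne) = cG (Fin.castSucc u) (Fin.succ v) (castSucc_ne_succ_of_le h.le)) ∧
     (((u : ℕ) + 1 = κ) →
        D (cG u v h.ne) = cG (Fin.castSucc u) (Fin.succ v) (castSucc_ne_succ_of_le h.le)
          + cG (Fin.succ u) (Fin.succ v) (succ_ne_of_ne h.ne)) ∧
     ((κ < (u : ℕ) + 1) →
        D (cG u v h.ne) = cG (Fin.succ u) (Fin.succ v) (succ_ne_of_ne h.ne)))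

/-- `T` is `ϑ_{m+1} : dk_{m+1,n} → dk_{m,n+1}` (the last pole becomes the first strand). -/
def IsTheta (m n : ℕ) (T : dkmn (m + 1) n →ₗ⁅ℚ⁆ dkmn m (n + 1)) : Prop :=
  (∀ (i : Fin (m + 1)) (j : Fin n),
     (∀ hi : (i : ℕ) < m, T (aG i j) = aG ⟨i, hi⟩ (Fin.succ j)) ∧
     ((i : ℕ) = m → T (aG i j) = cG 0 (Fin.succ j) (Fin.succ_ne_zero j).symm)) ∧
  (∀ (u v : Fin n) (h : u ≠ v), T (cG u v h) = cG (Fin.succ u) (Fin.succ v) (succ_ne_of_ne h))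

/-- The coface map `d_k : dk_{m,n} → dk_{m,n+1}`, built from the data of the pole
cofaces, the strand cofaces, and `ϑ_{m+1}`. -/
def coface (m n : ℕ) (Dp : ℕ → (dkmn m n →ₗ⁅ℚ⁆ dkmn (m + 1) n))
    (Ds : ℕ → (dkmn m n →ₗ⁅ℚ⁆ dkmn m (n + 1)))
    (T : dkmn (m + 1) n →ₗ⁅ℚ⁆ dkmn m (n + 1)) (k : ℕ) :
    dkmn m n →ₗ⁅ℚ⁆ dkmn m (n + 1) :=
  if k ≤ m then T.comp (Dp k) else Ds (k - m)

/-- The algebra map `ass_{m'+1} → ass_{m'}` with `x_p ↦ x_p` (`p < m'`) and `x_{m'} ↦ 0`. -/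
def setLast0A (m' : ℕ) : Ass (m' + 1) →ₐ[ℚ] Ass m' :=
  FreeAlgebra.lift ℚ fun p : Fin (m' + 1) =>
    if h : (p : ℕ) < m' then gen ⟨p, h⟩ else 0

/-- The Lie algebra map `FreeLie (Fin (m'+1)) → FreeLie (Fin m')` setting the last
generator to `0`. -/
def flSetLast0 (m' : ℕ) : FreeLieAlgebra ℚ (Fin (m' + 1)) →ₗ⁅ℚ⁆ FreeLieAlgebra ℚ (Fin m') :=
  FreeLieAlgebra.lift ℚ fun p : Fin (m' + 1) =>
    if h : (p : ℕ) < m' then FreeLieAlgebra.of ℚ ⟨p, h⟩ else 0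

/-! The idea: on `lie_n` the augmentation vanishes and `ι = -id`, so every `b ∈ lie_n` can be
written both as `Σ (∂_i b) x_i` and as `Σ x_i ι(∂_i b)`. Since `η_gr` only sees the
last letter of its first argument and the first letter of its second one, so
`η_gr(a, x_j c) = η_gr(a, x_j) c` and `η_gr(c x_i, x_j) = c η_gr(x_i, x_j) = -δ_{ij} c x_i`;
expanding `a` on the right and `b` on the left gives the formula. -/

lemma basisFreeMonoid_eq_wordProd {N : ℕ} (w : FreeMonoid (Fin N)) :
    FreeAlgebra.basisFreeMonoid ℚ (Fin N) w = wordProd w.toList := by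
  rw [FreeAlgebra.basisFreeMonoid, Module.Basis.map_apply, Finsupp.coe_basisSingleOne]
  change FreeAlgebra.equivMonoidAlgebraFreeMonoid.symm (MonoidAlgebra.single w 1) = _
  rw [FreeAlgebra.equivMonoidAlgebraFreeMonoid]
  change ((MonoidAlgebra.lift ℚ (FreeAlgebra ℚ (Fin N)) (FreeMonoid (Fin N)))
    (FreeMonoid.lift (FreeAlgebra.ι ℚ))) (MonoidAlgebra.single w 1) = _
  rw [MonoidAlgebra.lift_single, FreeMonoid.lift_apply, one_smul]
  rfl

lemma liftWord_wordProd {N : ℕ} {A : Type} [AddCommGroup A] [Module ℚ A]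
    (f : List (Fin N) → A) (l : List (Fin N)) : liftWord f (wordProd l) = f l := by
  rw [liftWord, ← FreeMonoid.toList_ofList l, ← basisFreeMonoid_eq_wordProd,
    Module.Basis.constr_basis]

lemma LinearMap.ext_wordProd {N : ℕ} {A : Type} [AddCommGroup A] [Module ℚ A]
    {f g : Ass N →ₗ[ℚ] A} (h : ∀ l, f (wordProd l) = g (wordProd l)) : f = g :=
  (FreeAlgebra.basisFreeMonoid ℚ (Fin N)).ext fun w => by
    simpa only [basisFreeMonoid_eq_wordProd] using h w.toList

lemma LinearMap.ext_wordProd₂ {N : ℕ} {A : Type} [AddCommGroup A] [Module ℚ A]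
    {f g : Ass N →ₗ[ℚ] Ass N →ₗ[ℚ] A}
    (h : ∀ l r, f (wordProd l) (wordProd r) = g (wordProd l) (wordProd r)) : f = g :=
  LinearMap.ext_basis (FreeAlgebra.basisFreeMonoid ℚ (Fin N))
    (FreeAlgebra.basisFreeMonoid ℚ (Fin N)) fun v w => by
    simpa only [basisFreeMonoid_eq_wordProd] using h v.toList w.toList

@[simp]
lemma wordProd_nil {N : ℕ} : wordProd ([] : List (Fin N)) = 1 := rfl

lemma wordProd_append {N : ℕ} (l r : List (Fin N)) :
    wordProd (l ++ r) = wordProd l * wordProd r := by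
  simp [wordProd]

lemma wordProd_cons {N : ℕ} (i : Fin N) (l : List (Fin N)) :
    wordProd (i :: l) = gen i * wordProd l := by
  simp [wordProd]

lemma wordProd_singleton {N : ℕ} (i : Fin N) : wordProd [i] = gen i := by
  simp [wordProd]

lemma wordProd_concat {N : ℕ} (l : List (Fin N)) (i : Fin N) :
    wordProd (l ++ [i]) = wordProd l * gen i := by
  simp [wordProd]

section Counit

open FreeAlgebra

lemma algebraMapInv_gen {N : ℕ} (i : Fin N) : algebraMapInv (gen i) = 0 := by
  simp [gen, algebraMapInv]

lemma algebraMapInv_eq_zero_of_mem_lieN {N : ℕ} {a : Ass N} (ha : a ∈ lieN N) :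
    algebraMapInv a = 0 := by
  induction ha using LieSubalgebra.lieSpan_induction with
  | mem x hx =>
      obtain ⟨i, rfl⟩ := hx
      exact algebraMapInv_gen i
  | zero => exact map_zero _
  | add x y _ _ hx hy => rw [map_add, hx, hy, add_zero]
  | smul c x _ hx => rw [map_smul, hx, smul_zero]
  | lie x y _ _ hx hy => rw [Ring.lie_def, map_sub, map_mul, map_mul, hx, hy, sub_self]

lemma partialD_one {N : ℕ} (i : Fin N) : partialD i (1 : Ass N) = 0 :=
  liftWord_wordProd _ []

lemma partialD_mul_gen {N : ℕ} (i j : Fin N) (c : Ass N) :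
    partialD i (c * gen j) = if j = i then c else 0 := by
  have key : (partialD i).comp (LinearMap.mulRight ℚ (gen j)) =
      if j = i then LinearMap.id else 0 := LinearMap.ext_wordProd fun l => by
    rw [LinearMap.comp_apply, LinearMap.mulRight_apply, ← wordProd_concat, partialD,
      liftWord_wordProd]
    split_ifs <;> simp [*]
  have := LinearMap.congr_fun key c
  split_ifs at this ⊢ <;> simpa using this

lemma eq_algebraMap_add_sum_partialD_mul_gen {N : ℕ} (a : Ass N) :
    a = algebraMap ℚ (Ass N) (algebraMapInv a) + ∑ i, partialD i a * gen i := by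
  suffices key : LinearMap.id = (Algebra.linearMap ℚ (Ass N)).comp
      (algebraMapInv : Ass N →ₐ[ℚ] ℚ).toLinearMap +
        ∑ i, (LinearMap.mulRight ℚ (gen i)).comp (partialD i) by
    simpa using LinearMap.congr_fun key a
  refine LinearMap.ext_wordProd fun l => ?_
  induction l using List.reverseRecOn with
  | nil => simp [partialD_one]
  | append_singleton l j _ => simp [wordProd_concat, partialD_mul_gen, algebraMapInv_gen]

lemma sum_partialD_mul_gen_of_mem_lieN {N : ℕ} {a : Ass N} (ha : a ∈ lieN N) :
    ∑ i, partialD i a * gen i = a := by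
  conv_rhs => rw [eq_algebraMap_add_sum_partialD_mul_gen a, algebraMapInv_eq_zero_of_mem_lieN ha]
  simp

end Counit

lemma iotaMap_wordProd {N : ℕ} (l : List (Fin N)) :
    iotaMap N (wordProd l) = ((-1 : ℚ) ^ l.length) • wordProd l.reverse :=
  liftWord_wordProd _ l

lemma iotaMap_gen {N : ℕ} (i : Fin N) : iotaMap N (gen i) = -gen i := by
  simpa [wordProd] using iotaMap_wordProd [i]

lemma iotaMap_mul {N : ℕ} (a b : Ass N) :
    iotaMap N (a * b) = iotaMap N b * iotaMap N a := by
  have key : (LinearMap.mul ℚ (Ass N)).compr₂ (iotaMap N) =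
      ((LinearMap.mul ℚ (Ass N)).flip.compl₁₂ (iotaMap N) (iotaMap N)) :=
    LinearMap.ext_wordProd₂ fun l r => by
      simp only [LinearMap.compr₂_apply, LinearMap.compl₁₂_apply, LinearMap.flip_apply,
        LinearMap.mul_apply', ← wordProd_append, iotaMap_wordProd, List.reverse_append,
        List.length_append, pow_add, smul_mul_smul_comm, mul_comm]
  exact LinearMap.congr_fun₂ key a b

lemma iotaMap_of_mem_lieN {N : ℕ} {a : Ass N} (ha : a ∈ lieN N) : iotaMap N a = -a := by
  induction ha using LieSubalgebra.lieSpan_induction with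
  | mem x hx =>
      obtain ⟨i, rfl⟩ := hx
      exact iotaMap_gen i
  | zero => rw [map_zero, neg_zero]
  | add x y _ _ hx hy => rw [map_add, hx, hy, neg_add]
  | smul c x _ hx => rw [map_smul, hx, smul_neg]
  | lie x y _ _ hx hy =>
      rw [Ring.lie_def, map_sub, iotaMap_mul, iotaMap_mul, hx, hy]
      noncomm_ring

lemma sum_gen_mul_iotaMap_partialD_of_mem_lieN {N : ℕ} {b : Ass N} (hb : b ∈ lieN N) :
    ∑ i, gen i * iotaMap N (partialD i b) = b :=
  calc ∑ i, gen i * iotaMap N (partialD i b)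
      = -iotaMap N (∑ i, partialD i b * gen i) := by
        simp [map_sum, iotaMap_mul, iotaMap_gen, Finset.sum_neg_distrib]
    _ = b := by
        rw [sum_partialD_mul_gen_of_mem_lieN hb, iotaMap_of_mem_lieN hb, neg_neg]

lemma etaGr_wordProd {N : ℕ} (l r : List (Fin N)) :
    etaGr N (wordProd l) (wordProd r) = etaWord l r := by
  rw [etaGr, liftWord_wordProd, liftWord_wordProd]

lemma etaGr_gen_gen {N : ℕ} (i j : Fin N) :
    etaGr N (gen i) (gen j) = if i = j then -gen i else 0 := by
  simpa [wordProd, etaWord] using etaGr_wordProd [i] [j]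

lemma etaGr_mul_gen {N : ℕ} (c : Ass N) (i : Fin N) (b : Ass N) :
    etaGr N (c * gen i) b = c * etaGr N (gen i) b := by
  have key : (etaGr N).comp (LinearMap.mulRight ℚ (gen i)) =
      (LinearMap.mul ℚ (Ass N)).compl₂ (etaGr N (gen i)) :=
    LinearMap.ext_wordProd₂ fun l r => by
      rw [LinearMap.comp_apply, LinearMap.compl₂_apply, LinearMap.mulRight_apply,
        LinearMap.mul_apply', ← wordProd_concat, ← wordProd_singleton, etaGr_wordProd,
        etaGr_wordProd]
      cases r with
      | nil => simp [etaWord]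
      | cons j t => simp [etaWord, wordProd_append]
  exact LinearMap.congr_fun₂ key c b

lemma etaGr_gen_mul {N : ℕ} (a : Ass N) (j : Fin N) (d : Ass N) :
    etaGr N a (gen j * d) = etaGr N a (gen j) * d := by
  have key : (etaGr N).compl₂ (LinearMap.mulLeft ℚ (gen j)) =
      (LinearMap.mul ℚ (Ass N)).comp ((etaGr N).flip (gen j)) :=
    LinearMap.ext_wordProd₂ fun l r => by
      rw [LinearMap.compl₂_apply, LinearMap.comp_apply, LinearMap.flip_apply,
        LinearMap.mulLeft_apply, LinearMap.mul_apply', ← wordProd_cons, ← wordProd_singleton,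
        etaGr_wordProd, etaGr_wordProd]
      unfold etaWord
      cases l.getLast? with
      | none => simp
      | some c => simp [wordProd_append, wordProd_cons, mul_assoc]
  exact LinearMap.congr_fun₂ key a d

lemma etaGr_gen_of_mem_lieN {N : ℕ} {a : Ass N} (ha : a ∈ lieN N) (j : Fin N) :
    etaGr N a (gen j) = -(partialD j a * gen j) := by
  conv_lhs => rw [← sum_partialD_mul_gen_of_mem_lieN ha]
  simp [etaGr_mul_gen, etaGr_gen_gen]

/-- `η_gr(a,b) = −Σ_i (∂_i a)·x_i·ι(∂_i b)` for `a, b ∈ lie_n`. -/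
theorem statement13 (n : ℕ) (a b : Ass n) (ha : a ∈ lieN n) (hb : b ∈ lieN n) :
    etaGr n a b = -∑ i, partialD i a * gen i * iotaMap n (partialD i b) :=
  calc etaGr n a b = etaGr n a (∑ i, gen i * iotaMap n (partialD i b)) := by
        rw [sum_gen_mul_iotaMap_partialD_of_mem_lieN hb]
    _ = ∑ i, etaGr n a (gen i) * iotaMap n (partialD i b) := by
        simp only [map_sum, etaGr_gen_mul]
    _ = -∑ i, partialD i a * gen i * iotaMap n (partialD i b) := by
        simp [etaGr_gen_of_mem_lieN ha, Finset.sum_neg_distrib]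

end
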